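/- Let G be an ample Hausdorff groupoid, Γ a discrete group, and c : G → Γ a continuous cocycle. Define A_R(G)_g := { f ∈ A_R(G) : supp(f) ⊆ c⁻¹(g) } for g ∈ Γ. Then A_R(G) = ⊕_{g ∈ Γ} A_R(G)_g as R-modules, and A_R(G)_g * A_R(G)_h ⊆ A_R(G)_{gh} for all g, h ∈ Γ; i.e., this defines a Γ-grading of the Steinberg algebra. -/

import Mathlib

structure GroupoidStruct (G : Type*) where
  src : G → G
  rng : G → G
  inv : G → G
  mul : G → G → G
  rng_src : ∀ a, rng (src a) = src a
  src_src : ∀ a, src (src a) = src a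
  src_rng : ∀ a, src (rng a) = rng a
  rng_rng : ∀ a, rng (rng a) = rng a
  src_inv : ∀ a, src (inv a) = rng a
  rng_inv : ∀ a, rng (inv a) = src a
  src_mul : ∀ a b, src a = rng b → src (mul a b) = src b
  rng_mul : ∀ a b, src a = rng b → rng (mul a b) = rng a
  mul_assoc' : ∀ a b c, src a = rng b → src b = rng c →
    mul (mul a b) c = mul a (mul b c)
  unit_mul : ∀ a, mul (rng a) a = a
  mul_unit : ∀ a, mul a (src a) = a
  inv_mul : ∀ a, mul (inv a) a = src a
  mul_inv : ∀ a, mul a (inv a) = rng a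
  inv_inv : ∀ a, inv (inv a) = a

namespace GroupoidStruct

variable {G : Type*} (𝒢 : GroupoidStruct G)

/-- The unit space `G⁰` of the groupoid. -/
def units : Set G := {x | 𝒢.src x = x}

/-- The set product `UV` of two subsets of the groupoid. -/
def setMul (U V : Set G) : Set G :=
  {η | ∃ a ∈ U, ∃ b ∈ V, 𝒢.src a = 𝒢.rng b ∧ 𝒢.mul a b = η}

/-- A bisection: a set on which the source and range maps are injective. -/
def IsBisection (U : Set G) : Prop := Set.InjOn 𝒢.src U ∧ Set.InjOn 𝒢.rng U

/-- A cocycle into a group: a groupoid homomorphism. -/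
def IsCocycle {Γ : Type*} [Group Γ] (c : G → Γ) : Prop :=
  ∀ a b, 𝒢.src a = 𝒢.rng b → c (𝒢.mul a b) = c a * c b

end GroupoidStruct

/-- A Hausdorff étale topological groupoid (the Hausdorff condition is imposed via a
`T2Space` instance on `G`). -/
structure EtaleGroupoid (G : Type*) [TopologicalSpace G] extends GroupoidStruct G where
  continuous_src : Continuous src
  continuous_rng : Continuous rng
  continuous_inv : Continuous inv
  continuousOn_mul : ContinuousOn (fun p : G × G => mul p.1 p.2) {p | src p.1 = rng p.2}
  etale_src : IsLocalHomeomorph src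
  etale_rng : IsLocalHomeomorph rng

/-- An ample groupoid: an étale groupoid whose unit space has a basis of compact open sets. -/
structure AmpleGroupoid (G : Type*) [TopologicalSpace G] extends EtaleGroupoid G where
  ample : ∀ x, src x = x → ∀ U : Set G, IsOpen U → x ∈ U →
    ∃ K : Set G, IsCompact K ∧ IsOpen K ∧ x ∈ K ∧ K ⊆ U ∧ ∀ y ∈ K, src y = y

/-- The convolution product on `R`-valued functions on the groupoid `G`:
`(f * g)(η) = ∑_{αβ = η} f(α) g(β)`. -/
noncomputable def conv {G : Type*} (𝒢 : GroupoidStruct G) {R : Type*} [CommRing R]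
    (f g : G → R) : G → R :=
  fun η => ∑ᶠ (p : G × G) (_ : 𝒢.src p.1 = 𝒢.rng p.2 ∧ 𝒢.mul p.1 p.2 = η), f p.1 * g p.2

/-- The carrier of the Steinberg algebra `A_R(G)`: locally constant compactly supported
`R`-valued functions on `G`. -/
def SteinbergSet {G : Type*} [TopologicalSpace G] (𝒢 : GroupoidStruct G)
    (R : Type*) [CommRing R] : Set (G → R) :=
  {f | IsLocallyConstant f ∧ IsCompact (Function.support f)}

/-- The diagonal subalgebra `D_R(G)`: elements of `A_R(G)` supported on the unit space. -/
def DiagSet {G : Type*} [TopologicalSpace G] (𝒢 : GroupoidStruct G)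
    (R : Type*) [CommRing R] : Set (G → R) :=
  {f | f ∈ SteinbergSet 𝒢 R ∧ Function.support f ⊆ GroupoidStruct.units 𝒢}

/-- `f` is homogeneous of degree `g` for the grading induced by the cocycle `c`,
i.e. `supp f ⊆ c⁻¹(g)`. -/
def InGrade {G : Type*} {Γ : Type*} [Group Γ] {R : Type*} [CommRing R]
    (c : G → Γ) (g : Γ) (f : G → R) : Prop :=
  ∀ η, f η ≠ 0 → c η = g

/-- A normaliser of the diagonal `D_R(G)` in `A_R(G)`: a pair `(m, n)` with
`m D n ∪ n D m ⊆ D`, `mnm = m` and `nmn = n`. -/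
def IsNormaliser {G : Type*} [TopologicalSpace G] (𝒢 : GroupoidStruct G)
    (R : Type*) [CommRing R] (m n : G → R) : Prop :=
  m ∈ SteinbergSet 𝒢 R ∧ n ∈ SteinbergSet 𝒢 R ∧
  (∀ d ∈ DiagSet 𝒢 R, conv 𝒢 m (conv 𝒢 d n) ∈ DiagSet 𝒢 R ∧
      conv 𝒢 n (conv 𝒢 d m) ∈ DiagSet 𝒢 R) ∧
  conv 𝒢 m (conv 𝒢 n m) = m ∧ conv 𝒢 n (conv 𝒢 m n) = n

/-- The involution `f*(η) = (f(η⁻¹))*` on `R`-valued functions on the groupoid. -/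
def starF {G : Type*} (𝒢 : GroupoidStruct G) {R : Type*} [CommRing R] [StarRing R]
    (f : G → R) : G → R :=
  fun η => star (f (𝒢.inv η))

/-!
The grading is read off pointwise. As `c` is locally constant, cutting `f` down to the clopen
fibres `c⁻¹(g)` splits it into homogeneous pieces, finitely many because `supp f` is compact,
and pieces of distinct degrees have disjoint supports. As `c (αβ) = c α * c β`, the product
`f₁ * f₂` of homogeneous elements of degrees `g` and `h` lives on `c⁻¹(gh)`.

The real content is that convolution stays in `A_R(G)`. Near a point `η₀`, the arrows of the
compact set `supp f₁` ending at `rng η` are the values at `rng η` of finitely many continuous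
local sections of the étale map `rng`, so `f₁ * f₂` is locally a finite sum of locally constant
functions; its support lies in the image of the compact set `supp f₁ ×_{G⁰} supp f₂` under
multiplication.
-/

open Function Topology

namespace IsLocalHomeomorph

variable {E X : Type*} [TopologicalSpace E] [TopologicalSpace X] {p : E → X}

theorem finite_inter_preimage_singleton (hp : IsLocalHomeomorph p) {K : Set E}
    (hK : IsCompact K) (x : X) : (K ∩ p ⁻¹' {x}).Finite := by
  choose e hmem hep using hp
  obtain ⟨t, ht⟩ := hK.elim_finite_subcover (fun a => (e a).source)
    (fun a => (e a).open_source) (fun a _ => Set.mem_iUnion.2 ⟨a, hmem a⟩)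
  have hcover : K ∩ p ⁻¹' {x} ⊆ ⋃ a ∈ t, (e a).source ∩ p ⁻¹' {x} := by
    rintro α ⟨hαK, hαx⟩
    obtain ⟨a, hat, hαa⟩ := Set.mem_iUnion₂.1 (ht hαK)
    exact Set.mem_biUnion hat ⟨hαa, hαx⟩
  refine (t.finite_toSet.biUnion fun a _ => ?_).subset hcover
  refine Set.Subsingleton.finite fun β hβ γ hγ => (e a).injOn hβ.1 hγ.1 ?_
  rw [← hep a]
  exact hβ.2.trans hγ.2.symm

/-- Disjoint neighbourhoods of the finitely many points of `K` over `x₀`, each inside a chart,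
give the sections; the compactness of `K` keeps further points of `K` away from the fibres
over points near `x₀`. -/
theorem exists_sections_near_fiber [T2Space E] [T2Space X] (hp : IsLocalHomeomorph p)
    {K : Set E} (hK : IsCompact K) (x₀ : X) :
    ∃ σ : E → X → E, (∀ α ∈ K ∩ p ⁻¹' {x₀}, σ α x₀ = α ∧ ContinuousAt (σ α) x₀) ∧
      ∀ᶠ x in 𝓝 x₀, (∀ α ∈ K ∩ p ⁻¹' {x₀}, p (σ α x) = x) ∧
        Set.InjOn (σ · x) (K ∩ p ⁻¹' {x₀}) ∧ K ∩ p ⁻¹' {x} ⊆ (σ · x) '' (K ∩ p ⁻¹' {x₀}) := by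
  set S := K ∩ p ⁻¹' {x₀}
  have hSfin : S.Finite := hp.finite_inter_preimage_singleton hK x₀
  have hpc : Continuous p := hp.continuous
  choose e hmem hep using hp
  obtain ⟨U, hU, hUdisj⟩ := hSfin.t2_separation
  set W : E → Set E := fun α => U α ∩ (e α).source
  have hWopen : ∀ α, IsOpen (W α) := fun α => (hU α).2.inter (e α).open_source
  have hWmem : ∀ α, α ∈ W α := fun α => ⟨(hU α).1, hmem α⟩
  set N := K \ ⋃ α ∈ S, W α
  have hNclosed : IsClosed (p '' N) :=
    ((hK.diff (isOpen_biUnion fun α _ => hWopen α)).image hpc).isClosed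
  have hx₀N : x₀ ∉ p '' N := by
    rintro ⟨β, ⟨hβK, hβW⟩, hβx₀⟩
    exact hβW (Set.mem_biUnion ⟨hβK, hβx₀⟩ (hWmem β))
  have hx₀ : ∀ α ∈ S, e α α = x₀ := fun α hα => by rw [← hep α]; exact hα.2
  set V := (p '' N)ᶜ ∩ ⋂ α ∈ S, e α '' W α
  have hV : V ∈ 𝓝 x₀ := by
    refine (hNclosed.isOpen_compl.inter (hSfin.isOpen_biInter fun α _ =>
      (e α).isOpen_image_of_subset_source (hWopen α) Set.inter_subset_right)).mem_nhds
      ⟨hx₀N, Set.mem_iInter₂.2 fun α hα => ⟨α, hWmem α, hx₀ α hα⟩⟩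
  have hsection : ∀ x ∈ V, ∀ α ∈ S, (e α).symm x ∈ W α ∧ p ((e α).symm x) = x := by
    rintro x ⟨-, hxW⟩ α hα
    obtain ⟨u, hu, rfl⟩ := Set.mem_iInter₂.1 hxW α hα
    rw [(e α).left_inv hu.2, hep α]
    exact ⟨hu, rfl⟩
  refine ⟨fun α => (e α).symm, fun α hα => ⟨?_, ?_⟩, ?_⟩
  · rw [← hx₀ α hα]
    exact (e α).left_inv (hmem α)
  · rw [← hx₀ α hα]
    exact (e α).continuousAt_symm ((e α).map_source (hmem α))
  filter_upwards [hV] with x hx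
  refine ⟨fun α hα => (hsection x hx α hα).2, fun α hα β hβ hαβ => ?_, ?_⟩
  · have hαβ : (e α).symm x = (e β).symm x := hαβ
    exact hUdisj.elim_set hα hβ _ (hsection x hx α hα).1.1 (hαβ ▸ (hsection x hx β hβ).1.1)
  · rintro β ⟨hβK, hβx⟩
    have hβW : β ∈ ⋃ α ∈ S, W α := by
      by_contra hβN
      exact hx.1 ⟨β, ⟨hβK, hβN⟩, hβx⟩
    obtain ⟨α, hα, hβα⟩ := Set.mem_iUnion₂.1 hβW
    refine ⟨α, hα, ?_⟩
    rw [← hβx, hep α]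
    exact (e α).left_inv hβα.2

end IsLocalHomeomorph

namespace GroupoidStruct

variable {G : Type*} (𝒢 : GroupoidStruct G)

theorem inv_mul_cancel_left {a b : G} (hab : 𝒢.src a = 𝒢.rng b) :
    𝒢.mul (𝒢.inv a) (𝒢.mul a b) = b := by
  rw [← 𝒢.mul_assoc' _ _ _ (𝒢.src_inv a) hab, 𝒢.inv_mul, hab, 𝒢.unit_mul]

theorem mul_inv_cancel_left {a η : G} (h : 𝒢.rng a = 𝒢.rng η) :
    𝒢.mul a (𝒢.mul (𝒢.inv a) η) = η := by
  rw [← 𝒢.mul_assoc' _ _ _ (𝒢.rng_inv a).symm (by rw [𝒢.src_inv, h]), 𝒢.mul_inv, h,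
    𝒢.unit_mul]

theorem src_eq_rng_inv_mul {a η : G} (h : 𝒢.rng a = 𝒢.rng η) :
    𝒢.src a = 𝒢.rng (𝒢.mul (𝒢.inv a) η) := by
  rw [𝒢.rng_mul _ _ (by rw [𝒢.src_inv, h]), 𝒢.rng_inv]

variable {𝒢} {R : Type*} [CommRing R]

theorem exists_mul_eq_of_conv_ne_zero {f₁ f₂ : G → R} {η : G} (h : conv 𝒢 f₁ f₂ η ≠ 0) :
    ∃ a b, 𝒢.src a = 𝒢.rng b ∧ 𝒢.mul a b = η ∧ f₁ a ≠ 0 ∧ f₂ b ≠ 0 := by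
  classical
  by_contra! hne
  refine h (finsum_eq_zero_of_forall_eq_zero fun p => ?_)
  rw [finsum_eq_if]
  split_ifs with hp
  · by_cases h₁ : f₁ p.1 = 0
    · rw [h₁, zero_mul]
    · rw [hne p.1 p.2 hp.1 hp.2 h₁, mul_zero]
  · rfl

theorem conv_apply_eq_sum {f₁ f₂ : G → R} {η : G} {T : Finset G}
    (hT : ∀ α ∈ T, 𝒢.rng α = 𝒢.rng η)
    (hsupp : ∀ α, f₁ α ≠ 0 → 𝒢.rng α = 𝒢.rng η → α ∈ T) :
    conv 𝒢 f₁ f₂ η = ∑ α ∈ T, f₁ α * f₂ (𝒢.mul (𝒢.inv α) η) := by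
  classical
  set φ : G → G × G := fun α => (α, 𝒢.mul (𝒢.inv α) η)
  have hconv : conv 𝒢 f₁ f₂ η = ∑ᶠ p : G × G,
      if 𝒢.src p.1 = 𝒢.rng p.2 ∧ 𝒢.mul p.1 p.2 = η then f₁ p.1 * f₂ p.2 else 0 :=
    finsum_congr fun p => finsum_eq_if
  have hsub : support (fun p : G × G =>
      if 𝒢.src p.1 = 𝒢.rng p.2 ∧ 𝒢.mul p.1 p.2 = η then f₁ p.1 * f₂ p.2 else 0) ⊆
      T.image φ := by
    rintro ⟨a, b⟩ hp
    obtain ⟨⟨hsrc, rfl⟩, hne⟩ := ite_ne_right_iff.1 hp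
    have ha : a ∈ T := hsupp a (left_ne_zero_of_mul hne) (𝒢.rng_mul _ _ hsrc).symm
    exact Finset.mem_image.2 ⟨a, ha, Prod.ext rfl (𝒢.inv_mul_cancel_left hsrc)⟩
  rw [hconv, finsum_eq_finsetSum_of_support_subset _ hsub,
    Finset.sum_image fun _ _ _ _ h => congrArg Prod.fst h]
  refine Finset.sum_congr rfl fun α hα => if_pos ⟨?_, ?_⟩
  · exact 𝒢.src_eq_rng_inv_mul (hT α hα)
  · exact 𝒢.mul_inv_cancel_left (hT α hα)

end GroupoidStruct

namespace EtaleGroupoid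

variable {G : Type*} [TopologicalSpace G] (𝒢 : EtaleGroupoid G)

theorem continuousAt_mul {Y : Type*} [TopologicalSpace Y] {a b : Y → G} {y₀ : Y}
    (ha : ContinuousAt a y₀) (hb : ContinuousAt b y₀)
    (hab : ∀ᶠ y in 𝓝 y₀, 𝒢.src (a y) = 𝒢.rng (b y)) :
    ContinuousAt (fun y => 𝒢.mul (a y) (b y)) y₀ :=
  (𝒢.continuousOn_mul _ hab.self_of_nhds).tendsto.comp
    (tendsto_nhdsWithin_iff.2 ⟨ha.prodMk hb, hab⟩)

variable {R : Type*} [CommRing R]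

theorem isLocallyConstant_conv [T2Space G] {f₁ f₂ : G → R} (hf₁ : IsLocallyConstant f₁)
    (hK : IsCompact (support f₁)) (hf₂ : IsLocallyConstant f₂) :
    IsLocallyConstant (conv 𝒢.toGroupoidStruct f₁ f₂) := by
  classical
  refine (IsLocallyConstant.iff_eventually_eq _).2 fun η₀ => ?_
  set S := support f₁ ∩ 𝒢.rng ⁻¹' {𝒢.rng η₀}
  have hS : S.Finite := 𝒢.etale_rng.finite_inter_preimage_singleton hK _
  obtain ⟨σ, hσ₀, hσ⟩ := 𝒢.etale_rng.exists_sections_near_fiber hK (𝒢.rng η₀)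
  have hσ' := 𝒢.continuous_rng.continuousAt.eventually hσ
  set term : G → G → R := fun α η =>
    f₁ (σ α (𝒢.rng η)) * f₂ (𝒢.mul (𝒢.inv (σ α (𝒢.rng η))) η)
  have hformula :
      ∀ᶠ η in 𝓝 η₀, conv 𝒢.toGroupoidStruct f₁ f₂ η = ∑ α ∈ hS.toFinset, term α η := by
    filter_upwards [hσ'] with η ⟨hrng, hinj, hcover⟩
    rw [GroupoidStruct.conv_apply_eq_sum (T := hS.toFinset.image (σ · (𝒢.rng η))),
      Finset.sum_image fun α hα β hβ => hinj (hS.mem_toFinset.1 hα) (hS.mem_toFinset.1 hβ)]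
    · simp only [Finset.mem_image, Set.Finite.mem_toFinset]
      rintro _ ⟨α, hα, rfl⟩
      exact hrng α hα
    · intro α hα hαη
      obtain ⟨β, hβ, rfl⟩ := hcover ⟨hα, hαη⟩
      exact Finset.mem_image_of_mem _ (hS.mem_toFinset.2 hβ)
  have hterm : ∀ α ∈ S, ∀ᶠ η in 𝓝 η₀, term α η = term α η₀ := by
    intro α hα
    have hτ : ContinuousAt (fun η => σ α (𝒢.rng η)) η₀ :=
      (hσ₀ α hα).2.comp 𝒢.continuous_rng.continuousAt
    have hcomposable : ∀ᶠ η in 𝓝 η₀, 𝒢.src (𝒢.inv (σ α (𝒢.rng η))) = 𝒢.rng η := by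
      filter_upwards [hσ'] with η hη
      rw [𝒢.src_inv]
      exact hη.1 α hα
    have hχ : ContinuousAt (fun η => 𝒢.mul (𝒢.inv (σ α (𝒢.rng η))) η) η₀ :=
      𝒢.continuousAt_mul (𝒢.continuous_inv.continuousAt.comp hτ) continuousAt_id hcomposable
    filter_upwards [hτ.eventually (hf₁.eventually_eq _), hχ.eventually (hf₂.eventually_eq _)]
      with η h₁ h₂
    simp only [term, h₁, h₂]
  filter_upwards [hformula, (Filter.eventually_all_finset _).2 fun α hα =>
    hterm α (hS.mem_toFinset.1 hα)] with η hη hterms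
  rw [hη, hformula.self_of_nhds]
  exact Finset.sum_congr rfl hterms

theorem conv_mem_steinbergSet [T2Space G] {f₁ f₂ : G → R}
    (h₁ : f₁ ∈ SteinbergSet 𝒢.toGroupoidStruct R) (h₂ : f₂ ∈ SteinbergSet 𝒢.toGroupoidStruct R) :
    conv 𝒢.toGroupoidStruct f₁ f₂ ∈ SteinbergSet 𝒢.toGroupoidStruct R := by
  have hlc := 𝒢.isLocallyConstant_conv h₁.1 h₁.2 h₂.1
  refine ⟨hlc, ?_⟩
  have hcomposable : IsCompact ((support f₁ ×ˢ support f₂) ∩ {p | 𝒢.src p.1 = 𝒢.rng p.2}) :=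
    (h₁.2.prod h₂.2).inter_right (isClosed_eq (𝒢.continuous_src.comp continuous_fst)
      (𝒢.continuous_rng.comp continuous_snd))
  refine (hcomposable.image_of_continuousOn (𝒢.continuousOn_mul.mono Set.inter_subset_right))
    |>.of_isClosed_subset (hlc.isOpen_fiber 0).isClosed_compl ?_
  intro η hη
  obtain ⟨a, b, hab, rfl, ha, hb⟩ := GroupoidStruct.exists_mul_eq_of_conv_ne_zero hη
  exact ⟨(a, b), ⟨⟨ha, hb⟩, hab⟩, rfl⟩

end EtaleGroupoid

theorem IsLocallyConstant.finite_image {X Y : Type*} [TopologicalSpace X] {f : X → Y}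
    (hf : IsLocallyConstant f) {K : Set X} (hK : IsCompact K) : (f '' K).Finite := by
  have := isCompact_iff_compactSpace.1 hK
  rw [Set.image_eq_range]
  exact (hf.comp_continuous continuous_subtype_val).range_finite

namespace InGrade

variable {G Γ R : Type*} [Group Γ] [CommRing R] {c : G → Γ}

theorem indicator_preimage_singleton (f : G → R) (g : Γ) :
    InGrade c g ((c ⁻¹' {g}).indicator f) := fun _ hη =>
  Set.mem_of_indicator_ne_zero (s := c ⁻¹' {g}) hη

theorem eq_zero_of_sum_eq_zero {F : Finset Γ} {comp : Γ → G → R}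
    (h : ∀ g ∈ F, InGrade c g (comp g)) (hsum : ∑ g ∈ F, comp g = 0) :
    ∀ g ∈ F, comp g = 0 := by
  intro g hg
  funext η
  by_contra hne
  have hη : c η = g := h g hg η hne
  have hsumη := congrFun hsum η
  rw [Finset.sum_apply, Finset.sum_eq_single g (fun g' hg' hg'g => ?_) (absurd hg)] at hsumη
  · exact hne hsumη
  · by_contra hne'
    exact hg'g ((h g' hg' η hne').symm.trans hη)

theorem conv {𝒢 : GroupoidStruct G} (hc : 𝒢.IsCocycle c) {g h : Γ} {f₁ f₂ : G → R}
    (h₁ : InGrade c g f₁) (h₂ : InGrade c h f₂) : InGrade c (g * h) (conv 𝒢 f₁ f₂) := by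
  intro η hη
  obtain ⟨a, b, hab, rfl, ha, hb⟩ := GroupoidStruct.exists_mul_eq_of_conv_ne_zero hη
  rw [hc a b hab, h₁ a ha, h₂ b hb]

end InGrade

theorem indicator_preimage_singleton_mem_steinbergSet {G Γ R : Type*} [TopologicalSpace G]
    [CommRing R] {𝒢 : GroupoidStruct G} {c : G → Γ} (hc : IsLocallyConstant c) {f : G → R}
    (hf : f ∈ SteinbergSet 𝒢 R) (g : Γ) : (c ⁻¹' {g}).indicator f ∈ SteinbergSet 𝒢 R := by
  refine ⟨(LocallyConstant.indicator ⟨f, hf.1⟩ (hc.isClopen_fiber g)).isLocallyConstant, ?_⟩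
  rw [Set.support_indicator]
  exact hf.2.inter_left (hc.isClosed_fiber g)

theorem sum_indicator_preimage_singleton {G Γ R : Type*} [AddCommMonoid R] {c : G → Γ}
    {f : G → R} {F : Finset Γ} (hF : c '' support f ⊆ F) :
    ∑ g ∈ F, (c ⁻¹' {g}).indicator f = f := by
  classical
  funext η
  rw [Finset.sum_apply]
  by_cases hη : f η = 0
  · rw [hη]
    exact Finset.sum_eq_zero fun g _ => Set.indicator_apply_eq_zero.2 fun _ => hη
  · rw [Finset.sum_eq_single (c η)
      (fun g _ hg => Set.indicator_of_notMem (s := c ⁻¹' {g}) (a := η) (Ne.symm hg) f)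
      (fun h => absurd (hF ⟨η, hη, rfl⟩) h)]
    exact Set.indicator_of_mem (s := c ⁻¹' {c η}) rfl f

/-- A continuous cocycle `c : G → Γ` induces a `Γ`-grading of the Steinberg algebra:
every element decomposes as a finite sum of homogeneous components, the decomposition is
direct (a finite sum of homogeneous components of distinct degrees vanishes only if each
component vanishes), and `A_R(G)_g * A_R(G)_h ⊆ A_R(G)_{gh}`. -/
theorem steinberg_grading {G : Type*} [TopologicalSpace G] [T2Space G]
    {R : Type*} [CommRing R] (𝒢 : AmpleGroupoid G)
    {Γ : Type*} [Group Γ] (c : G → Γ) (hc : 𝒢.toGroupoidStruct.IsCocycle c)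
    (hcont : IsLocallyConstant c) :
    (∀ f ∈ SteinbergSet 𝒢.toGroupoidStruct R, ∃ (F : Finset Γ) (comp : Γ → (G → R)),
      (∀ g ∈ F, comp g ∈ SteinbergSet 𝒢.toGroupoidStruct R ∧ InGrade c g (comp g)) ∧
      f = ∑ g ∈ F, comp g) ∧
    (∀ (F : Finset Γ) (comp : Γ → (G → R)),
      (∀ g ∈ F, comp g ∈ SteinbergSet 𝒢.toGroupoidStruct R ∧ InGrade c g (comp g)) →
      (∑ g ∈ F, comp g) = 0 → ∀ g ∈ F, comp g = 0) ∧
    (∀ (g h : Γ) (f₁ f₂ : G → R), f₁ ∈ SteinbergSet 𝒢.toGroupoidStruct R →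
      f₂ ∈ SteinbergSet 𝒢.toGroupoidStruct R → InGrade c g f₁ → InGrade c h f₂ →
      conv 𝒢.toGroupoidStruct f₁ f₂ ∈ SteinbergSet 𝒢.toGroupoidStruct R ∧
      InGrade c (g * h) (conv 𝒢.toGroupoidStruct f₁ f₂)) := by
  refine ⟨fun f hf => ?_, fun F comp hcomp => InGrade.eq_zero_of_sum_eq_zero fun g hg =>
    (hcomp g hg).2, fun g h f₁ f₂ h₁ h₂ hg hh =>
    ⟨𝒢.conv_mem_steinbergSet h₁ h₂, hg.conv hc hh⟩⟩
  have hfin : (c '' support f).Finite := hcont.finite_image hf.2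
  refine ⟨hfin.toFinset, fun g => (c ⁻¹' {g}).indicator f, fun g _ =>
    ⟨indicator_preimage_singleton_mem_steinbergSet hcont hf g,
      InGrade.indicator_preimage_singleton f g⟩, ?_⟩
  exact (sum_indicator_preimage_singleton hfin.coe_toFinset.superset).symm
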